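/- arXiv:2112.09396 — 4 statements merged into one kernel-verified Lean document; each statement's English description precedes it below -/
import Mathlib

section
/- For every tournament T on n vertices, the minimum codegree δ₂(T) := min over pairs {x,y} of the number of cyclically oriented triangles containing both x and y satisfies δ₂(T) ≤ ⌊(n+1)/4⌋. -/
set_option maxHeartbeats 1600000

/-- `{x,y,z}` induces a cyclically oriented triangle in the tournament `r`. -/
abbrev CycTri {V : Type*} (r : V → V → Prop) (x y z : V) : Prop :=
  (r x y ∧ r y z ∧ r z x) ∨ (r y x ∧ r x z ∧ r z y)

/-- Every tournament on `n ≥ 2` vertices has a pair of vertices lying in at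
most `⌊(n+1)/4⌋` cyclically oriented triangles, i.e. `δ₂(T) ≤ ⌊(n+1)/4⌋`. -/
theorem stmt_5 {V : Type*} [Fintype V] [DecidableEq V] (n : ℕ) (hn : 2 ≤ n)
    (hV : Fintype.card V = n)
    (r : V → V → Prop) [DecidableRel r]
    (hasym : ∀ x y, r x y → ¬ r y x)
    (htot : ∀ x y, x ≠ y → r x y ∨ r y x) :
    ∃ x y : V, x ≠ y ∧
      (Finset.univ.filter (fun z => CycTri r x y z)).card ≤ (n + 1) / 4 := by
  classical
  by_contra hcon
  push_neg at hcon
  have hrirr : ∀ x : V, ¬ r x x := fun x hx => hasym x x hx hx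
  set m : ℕ := (n + 1) / 4 with hm
  set d : V → ℕ := fun x => (Finset.univ.filter (fun y => r x y)).card with hd
  have hdeg : ∀ x : V, d x = ∑ y : V, (if r x y then 1 else 0) := by
    intro x; rw [hd]; exact Finset.card_filter _ _
  set S1 : ℕ := ∑ x : V, d x with hS1
  set S2 : ℕ := ∑ x : V, (d x)^2 with hS2
  set T : ℕ := ∑ x : V, ∑ y : V, ∑ z : V, (if CycTri r x y z then (1:ℕ) else 0) with hT
  set Sa : ℕ := ∑ x : V, ∑ y : V, ∑ z : V, (if (y ≠ z ∧ r x y ∧ r x z) then (1:ℕ) else 0)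
    with hSadef
  -- row count
  have hrow : ∀ x : V, (∑ y : V, if x = y then (0:ℕ) else 1) = n - 1 := by
    intro x
    have h1 : (∑ y : V, if x = y then (0:ℕ) else 1)
        + (∑ y : V, if x = y then (1:ℕ) else 0) = n := by
      rw [← Finset.sum_add_distrib]
      rw [Finset.sum_congr rfl (fun y _ => by by_cases h : x = y <;> simp [h] :
        ∀ y ∈ Finset.univ, ((if x = y then (0:ℕ) else 1) + if x = y then (1:ℕ) else 0) = 1)]
      simp [hV]
    have h2 : (∑ y : V, if x = y then (1:ℕ) else 0) = 1 := by simp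
    omega
  -- degree sum
  have hF1 : 2 * S1 = n * (n - 1) := by
    have e1 : S1 = ∑ x : V, ∑ y : V, (if r x y then (1:ℕ) else 0) :=
      Finset.sum_congr rfl fun x _ => hdeg x
    have e2 : S1 = ∑ x : V, ∑ y : V, (if r y x then (1:ℕ) else 0) := by
      rw [e1]; exact Finset.sum_comm
    calc 2 * S1 = (∑ x : V, ∑ y : V, (if r x y then (1:ℕ) else 0)) +
          (∑ x : V, ∑ y : V, (if r y x then (1:ℕ) else 0)) := by omega
      _ = ∑ x : V, ∑ y : V, ((if r x y then (1:ℕ) else 0) + (if r y x then 1 else 0)) := by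
          rw [← Finset.sum_add_distrib]
          exact Finset.sum_congr rfl fun x _ => (Finset.sum_add_distrib).symm
      _ = ∑ x : V, ∑ y : V, (if x = y then (0:ℕ) else 1) := by
          refine Finset.sum_congr rfl fun x _ => Finset.sum_congr rfl fun y _ => ?_
          by_cases hxy : x = y
          · subst hxy; simp [hrirr x]
          · rcases htot x y hxy with h | h
            · simp [h, hasym x y h, hxy]
            · simp [h, hasym y x h, hxy]
      _ = ∑ x : V, (n - 1) := Finset.sum_congr rfl fun x _ => hrow x
      _ = n * (n - 1) := by simp [hV, mul_comm]
  -- inner count for Sa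
  have hinner : ∀ x y : V,
      (∑ z : V, if (y ≠ z ∧ r x y ∧ r x z) then (1:ℕ) else 0) + (if r x y then 1 else 0)
        = if r x y then d x else 0 := by
    intro x y
    by_cases hxy : r x y
    · rw [if_pos hxy, if_pos hxy]
      have e : ∀ z : V, (if (y ≠ z ∧ r x y ∧ r x z) then (1:ℕ) else 0)
          = (if (y ≠ z ∧ r x z) then 1 else 0) := fun z => by simp [hxy]
      rw [Finset.sum_congr rfl fun z _ => e z]
      have h2 : (∑ z : V, if (y ≠ z ∧ r x z) then (1:ℕ) else 0)
          + (∑ z : V, if (y = z ∧ r x z) then (1:ℕ) else 0) = d x := by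
        rw [← Finset.sum_add_distrib, hdeg x]
        exact Finset.sum_congr rfl fun z _ => by by_cases h : y = z <;> simp [h]
      have h3 : (∑ z : V, if (y = z ∧ r x z) then (1:ℕ) else 0) = 1 := by
        rw [Finset.sum_congr rfl (fun z _ => by by_cases h : y = z <;> simp [h] :
          ∀ z ∈ Finset.univ, (if (y = z ∧ r x z) then (1:ℕ) else 0)
            = if y = z then (if r x z then 1 else 0) else 0)]
        rw [Finset.sum_ite_eq]
        simp [hxy]
      omega
    · simp [hxy]
  have hSaS1 : Sa + S1 = S2 := by
    rw [hSadef, hS1, hS2, ← Finset.sum_add_distrib]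
    refine Finset.sum_congr rfl fun x _ => ?_
    calc (∑ y : V, ∑ z : V, (if (y ≠ z ∧ r x y ∧ r x z) then (1:ℕ) else 0)) + d x
        = ∑ y : V, ((∑ z : V, (if (y ≠ z ∧ r x y ∧ r x z) then (1:ℕ) else 0))
            + (if r x y then 1 else 0)) := by
          rw [Finset.sum_add_distrib, ← hdeg x]
      _ = ∑ y : V, (if r x y then d x else 0) :=
          Finset.sum_congr rfl fun y _ => hinner x y
      _ = ∑ y : V, (if r x y then (1:ℕ) else 0) * d x :=
          Finset.sum_congr rfl fun y _ => by by_cases h : r x y <;> simp [h]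
      _ = (∑ y : V, (if r x y then (1:ℕ) else 0)) * d x := by rw [Finset.sum_mul]
      _ = (d x)^2 := by rw [← hdeg x, sq]
  -- the key pointwise identity
  have hkey : ∀ x y z : V,
      (if CycTri r x y z then (1:ℕ) else 0)
      + (if (y ≠ z ∧ r x y ∧ r x z) then 1 else 0)
      + (if (x ≠ z ∧ r y x ∧ r y z) then 1 else 0)
      + (if (x ≠ y ∧ r z x ∧ r z y) then 1 else 0)
      = if (x ≠ y ∧ y ≠ z ∧ x ≠ z) then 1 else 0 := by
    intro x y z
    by_cases hxy : x = y
    · subst hxy; simp [CycTri, hrirr x]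
    by_cases hyz : y = z
    · subst hyz; simp [CycTri, hrirr y]
    by_cases hxz : x = z
    · subst hxz; simp [CycTri, hrirr x]
    rcases htot x y hxy with h1 | h1 <;> rcases htot y z hyz with h2 | h2 <;>
      rcases htot x z hxz with h3 | h3 <;>
        simp [CycTri, hxy, hyz, hxz, h1, h2, h3, hasym _ _ h1, hasym _ _ h2, hasym _ _ h3]
  -- count of distinct triples, inner part
  have hrow2 : ∀ x y : V, (∑ z : V, if (x ≠ y ∧ y ≠ z ∧ x ≠ z) then (1:ℕ) else 0)
      = if x = y then 0 else n - 2 := by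
    intro x y
    by_cases hxy : x = y
    · simp [hxy]
    · rw [if_neg hxy]
      have h1 : (∑ z : V, if (x ≠ y ∧ y ≠ z ∧ x ≠ z) then (1:ℕ) else 0)
          + (∑ z : V, if y = z then (1:ℕ) else 0)
          + (∑ z : V, if (x = z ∧ y ≠ z) then (1:ℕ) else 0) = n := by
        rw [← Finset.sum_add_distrib, ← Finset.sum_add_distrib]
        rw [Finset.sum_congr rfl (fun z _ => by
          by_cases h2 : y = z <;> by_cases h3 : x = z <;> simp [hxy, h2, h3] :
          ∀ z ∈ Finset.univ, ((if (x ≠ y ∧ y ≠ z ∧ x ≠ z) then (1:ℕ) else 0)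
            + (if y = z then (1:ℕ) else 0) + (if (x = z ∧ y ≠ z) then (1:ℕ) else 0)) = 1)]
        simp [hV]
      have h2 : (∑ z : V, if y = z then (1:ℕ) else 0) = 1 := by simp
      have h3 : (∑ z : V, if (x = z ∧ y ≠ z) then (1:ℕ) else 0) = 1 := by
        rw [Finset.sum_congr rfl (fun z _ => by
          by_cases h : x = z <;> by_cases h2 : y = z <;> simp [h, h2] :
          ∀ z ∈ Finset.univ, (if (x = z ∧ y ≠ z) then (1:ℕ) else 0)
            = if x = z then (if y = z then 0 else 1) else 0), Finset.sum_ite_eq]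
        rw [if_pos (Finset.mem_univ x), if_neg (fun h => hxy (h.symm))]
      omega
  -- the master identity
  have hmaster : T + 3 * Sa = n * ((n - 2) * (n - 1)) := by
    have hb : (∑ x : V, ∑ y : V, ∑ z : V, (if (x ≠ z ∧ r y x ∧ r y z) then (1:ℕ) else 0))
        = Sa := by
      rw [hSadef]; exact Finset.sum_comm
    have hc : (∑ x : V, ∑ y : V, ∑ z : V, (if (x ≠ y ∧ r z x ∧ r z y) then (1:ℕ) else 0))
        = Sa := by
      rw [hSadef]
      rw [Finset.sum_congr rfl (fun x _ => Finset.sum_comm :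
        ∀ x ∈ Finset.univ, (∑ y : V, ∑ z : V, (if (x ≠ y ∧ r z x ∧ r z y) then (1:ℕ) else 0))
          = ∑ z : V, ∑ y : V, (if (x ≠ y ∧ r z x ∧ r z y) then (1:ℕ) else 0))]
      exact Finset.sum_comm
    have hrhs : (∑ x : V, ∑ y : V, ∑ z : V, (if (x ≠ y ∧ y ≠ z ∧ x ≠ z) then (1:ℕ) else 0))
        = n * ((n - 2) * (n - 1)) := by
      rw [Finset.sum_congr rfl (fun x _ => Finset.sum_congr rfl fun y _ => hrow2 x y)]
      rw [Finset.sum_congr rfl (fun x _ => by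
        rw [Finset.sum_congr rfl (fun y _ => by by_cases h : x = y <;> simp [h] :
          ∀ y ∈ Finset.univ, (if x = y then (0:ℕ) else n - 2)
            = (n - 2) * (if x = y then 0 else 1)), ← Finset.mul_sum, hrow x] :
        ∀ x ∈ Finset.univ, (∑ y : V, if x = y then (0:ℕ) else n - 2) = (n-2) * (n-1))]
      simp [hV, mul_comm]
    have hsum : (∑ x : V, ∑ y : V, ∑ z : V,
        ((if CycTri r x y z then (1:ℕ) else 0)
          + (if (y ≠ z ∧ r x y ∧ r x z) then 1 else 0)
          + (if (x ≠ z ∧ r y x ∧ r y z) then 1 else 0)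
          + (if (x ≠ y ∧ r z x ∧ r z y) then 1 else 0)))
        = ∑ x : V, ∑ y : V, ∑ z : V, (if (x ≠ y ∧ y ≠ z ∧ x ≠ z) then (1:ℕ) else 0) :=
      Finset.sum_congr rfl fun x _ => Finset.sum_congr rfl fun y _ =>
        Finset.sum_congr rfl fun z _ => hkey x y z
    simp only [Finset.sum_add_distrib] at hsum
    rw [hb, hc, hrhs, ← hT, ← hSadef] at hsum
    omega
  -- lower bound on T
  have hTlb : n * ((n - 1) * (m + 1)) ≤ T := by
    have hxy : ∀ x : V, (n-1) * (m+1)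
        ≤ ∑ y : V, ∑ z : V, (if CycTri r x y z then (1:ℕ) else 0) := by
      intro x
      have h1 : (∑ y ∈ Finset.univ.erase x, ∑ z : V, (if CycTri r x y z then (1:ℕ) else 0))
          ≤ ∑ y : V, ∑ z : V, (if CycTri r x y z then (1:ℕ) else 0) :=
        Finset.sum_le_sum_of_subset (Finset.subset_univ _)
      have h2 : ∀ y ∈ Finset.univ.erase x,
          m + 1 ≤ ∑ z : V, (if CycTri r x y z then (1:ℕ) else 0) := by
        intro y hy
        have hne : x ≠ y := (Finset.ne_of_mem_erase hy).symm
        have hcc := hcon x y hne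
        have hcf : (Finset.univ.filter (fun z => CycTri r x y z)).card
            = ∑ z : V, (if CycTri r x y z then (1:ℕ) else 0) := Finset.card_filter _ _
        omega
      have h3 := Finset.card_nsmul_le_sum (Finset.univ.erase x)
        (fun y => ∑ z : V, (if CycTri r x y z then (1:ℕ) else 0)) (m+1) h2
      have h4 : (Finset.univ.erase x).card = n - 1 := by
        rw [Finset.card_erase_of_mem (Finset.mem_univ x), Finset.card_univ, hV]
      rw [h4, smul_eq_mul] at h3
      exact h3.trans h1
    have h5 := Finset.card_nsmul_le_sum (Finset.univ : Finset V)
      (fun x => ∑ y : V, ∑ z : V, (if CycTri r x y z then (1:ℕ) else 0))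
      ((n-1)*(m+1)) (fun x _ => hxy x)
    rw [Finset.card_univ, hV, smul_eq_mul] at h5
    rw [hT]
    exact h5
  -- Cauchy–Schwarz
  have hCS : (S1:ℤ)^2 ≤ (n:ℤ) * (S2:ℤ) := by
    have h := sq_sum_le_card_mul_sum_sq (s := (Finset.univ : Finset V))
      (f := fun x => (d x : ℤ))
    rw [Finset.card_univ, hV] at h
    have e1 : ((S1:ℕ):ℤ) = ∑ x : V, (d x : ℤ) := by rw [hS1]; push_cast; rfl
    have e2 : ((S2:ℕ):ℤ) = ∑ x : V, ((d x : ℤ))^2 := by rw [hS2]; push_cast; rfl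
    rw [e1, e2]; exact h
  -- final arithmetic over ℤ
  have h1n : 1 ≤ n := by omega
  zify [h1n, hn] at hF1 hmaster hTlb
  have hN : (2:ℤ) ≤ (n:ℤ) := by exact_mod_cast hn
  have hSZ : (Sa:ℤ) + (S1:ℤ) = (S2:ℤ) := by exact_mod_cast hSaS1
  have hmZ : (n:ℤ) + 2 ≤ 4*((m:ℤ)+1) := by
    have : n + 2 ≤ 4*(m+1) := by omega
    exact_mod_cast this
  set N : ℤ := (n:ℤ) with hNdef
  have e2 : (2*(S1:ℤ))^2 = (N*(N-1))^2 := by rw [hF1]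
  have e3 : 12*(N*(S1:ℤ)) = 6*(N*(N*(N-1))) := by
    rw [show 12*(N*(S1:ℤ)) = 6*(N*(2*(S1:ℤ))) from by ring, hF1]
  have e5 : N*(T:ℤ) + 3*(N*(Sa:ℤ)) = N*(((N:ℤ) - 2)*(N-1)*N) := by
    rw [show N*(T:ℤ) + 3*(N*(Sa:ℤ)) = N*((T:ℤ) + 3*(Sa:ℤ)) from by ring, hmaster]
    ring
  have e6 : N*(Sa:ℤ) + N*(S1:ℤ) = N*(S2:ℤ) := by
    rw [show N*(Sa:ℤ) + N*(S1:ℤ) = N*((Sa:ℤ) + (S1:ℤ)) from by ring, hSZ]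
  have e7 : N*((N-1)*((m:ℤ)+1)*N) ≤ N*(T:ℤ) := by
    apply mul_le_mul_of_nonneg_left _ (by linarith : (0:ℤ) ≤ N)
    calc (N-1)*((m:ℤ)+1)*N = N*((N-1)*((m:ℤ)+1)) := by ring
      _ ≤ (T:ℤ) := hTlb
  have e1' : 12*((S1:ℤ)^2) ≤ 12*(N*(S2:ℤ)) := by linarith [hCS]
  have e4 : (N*N*(N-1))*(N+2) ≤ (N*N*(N-1))*(4*((m:ℤ)+1)) := by
    apply mul_le_mul_of_nonneg_left hmZ
    nlinarith [hN]
  have e8 : (4:ℤ) ≤ N*N*(N-1) := by nlinarith [hN]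
  nlinarith [e1', e2, e3, e4, e5, e6, e7, e8]
end

section
/- If T is a tournament on n vertices with minimum codegree δ₂(T) = (n+1)/4, then every vertex v satisfies d^-(v) = d^+(v) = (n-1)/2, and for every pair of distinct vertices v,w, the number of cyclically oriented triangles containing both v and w is exactly (n+1)/4. -/
open Finset

section Aux

variable {V : Type*} [Fintype V] [DecidableEq V]
variable (r : V → V → Prop) [DecidableRel r]

/-- out-degree as an indicator sum -/
private def outd (v : V) : ℕ := ∑ u : V, if r v u then 1 else 0

/-- in-degree as an indicator sum -/
private def ind (v : V) : ℕ := ∑ u : V, if r u v then 1 else 0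

/-- number of ordered directed 3-cycles -/
private def em3 : ℕ := ∑ x : V, ∑ y : V, ∑ z : V, if r x y ∧ r y z ∧ r z x then 1 else 0

/-- number of ordered "transitive" triples -/
private def tt3 : ℕ := ∑ x : V, ∑ y : V, ∑ z : V, if r x y ∧ r y z ∧ r x z then 1 else 0

/-- codegree as an indicator sum -/
private def cyc (v w : V) : ℕ := ∑ z : V, if CycTri r v w z then 1 else 0

variable (hasym : ∀ x y, r x y → ¬ r y x) (htot : ∀ x y, x ≠ y → r x y ∨ r y x)

include hasym in
private lemma hrr : ∀ x, ¬ r x x := fun x h => hasym x x h h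

include hasym htot in
private lemma deg_sum (v : V) : ind r v + outd r v + 1 = Fintype.card V := by
  have h1 : ind r v + outd r v = ∑ u : V, ((if r u v then 1 else 0) + (if r v u then 1 else 0)) := by
    rw [ind, outd, Finset.sum_add_distrib]
  have h2 : ∀ u : V, ((if r u v then 1 else 0) + (if r v u then 1 else 0))
      = (if u = v then 0 else 1) := by
    intro u
    by_cases h : u = v
    · subst h; simp [hrr r hasym u]
    · rcases htot u v h with h1 | h1
      · simp [h, h1, hasym u v h1]
      · simp [h, h1, hasym v u h1]
  have h3 : ind r v + outd r v = ∑ u : V, (if u = v then 0 else 1) := by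
    rw [h1]; exact Finset.sum_congr rfl (fun u _ => h2 u)
  have h4 : (∑ u : V, if u = v then (0:ℕ) else 1) + (∑ u : V, if u = v then (1:ℕ) else 0)
      = Fintype.card V := by
    rw [← Finset.sum_add_distrib]
    have hpt : ∀ u : V, ((if u = v then (0:ℕ) else 1) + (if u = v then 1 else 0)) = 1 := by
      intro u; by_cases h : u = v <;> simp [h]
    rw [Finset.sum_congr rfl (fun u _ => hpt u), Finset.sum_const, Finset.card_univ,
      smul_eq_mul, mul_one]
  have h5 : (∑ u : V, if u = v then (1:ℕ) else 0) = 1 := by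
    simp [Finset.sum_ite_eq']
  omega

include hasym in
private lemma sum_ind_eq : ∑ v : V, ind r v = ∑ v : V, outd r v := by
  simp only [ind, outd]
  exact Finset.sum_comm

include hasym in
private lemma sum_cyc : ∑ v : V, ∑ w : V, cyc r v w = 2 * em3 r := by
  have h1 : ∀ v w z : V, (if CycTri r v w z then (1:ℕ) else 0)
      = (if r v w ∧ r w z ∧ r z v then 1 else 0) + (if r w v ∧ r v z ∧ r z w then 1 else 0) := by
    intro v w z
    by_cases hA : r v w ∧ r w z ∧ r z v
    · have hB : ¬ (r w v ∧ r v z ∧ r z w) := fun hB => hasym v w hA.1 hB.1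
      simp [CycTri, hA, hB]
    · by_cases hB : r w v ∧ r v z ∧ r z w
      · simp [CycTri, hA, hB]
      · simp [CycTri, hA, hB]
  have h2 : ∑ v : V, ∑ w : V, cyc r v w
      = (∑ v : V, ∑ w : V, ∑ z : V, if r v w ∧ r w z ∧ r z v then 1 else 0)
      + (∑ v : V, ∑ w : V, ∑ z : V, if r w v ∧ r v z ∧ r z w then 1 else 0) := by
    rw [← Finset.sum_add_distrib]
    refine Finset.sum_congr rfl (fun v _ => ?_)
    rw [← Finset.sum_add_distrib]
    refine Finset.sum_congr rfl (fun w _ => ?_)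
    rw [cyc, ← Finset.sum_add_distrib]
    exact Finset.sum_congr rfl (fun z _ => h1 v w z)
  have h3 : (∑ v : V, ∑ w : V, ∑ z : V, if r w v ∧ r v z ∧ r z w then (1:ℕ) else 0) = em3 r := by
    rw [Finset.sum_comm]
    rfl
  rw [h2, h3, em3]
  ring

include hasym htot in
private lemma path_count : ∑ y : V, ind r y * outd r y = em3 r + tt3 r := by
  have h1 : ∀ y : V, ind r y * outd r y
      = ∑ x : V, ∑ z : V, if r x y ∧ r y z then 1 else 0 := by
    intro y
    rw [ind, outd, Finset.sum_mul_sum]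
    refine Finset.sum_congr rfl (fun x _ => Finset.sum_congr rfl (fun z _ => ?_))
    by_cases h : r x y <;> by_cases h' : r y z <;> simp [h, h']
  have h2 : ∀ x y z : V, (if r x y ∧ r y z then (1:ℕ) else 0)
      = (if r x y ∧ r y z ∧ r z x then 1 else 0) + (if r x y ∧ r y z ∧ r x z then 1 else 0) := by
    intro x y z
    by_cases h : r x y ∧ r y z
    · have hxz : x ≠ z := by
        rintro rfl; exact hasym x y h.1 h.2
      rcases htot x z hxz with h1 | h1
      · have h2 : ¬ r z x := hasym x z h1
        simp [h, h.1, h.2, h1, h2]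
      · have h2 : ¬ r x z := hasym z x h1
        simp [h, h.1, h.2, h1, h2]
    · have hA : ¬ (r x y ∧ r y z ∧ r z x) := fun hh => h ⟨hh.1, hh.2.1⟩
      have hB : ¬ (r x y ∧ r y z ∧ r x z) := fun hh => h ⟨hh.1, hh.2.1⟩
      simp [h, hA, hB]
  have h3 : ∑ y : V, ind r y * outd r y
      = (∑ y : V, ∑ x : V, ∑ z : V, if r x y ∧ r y z ∧ r z x then 1 else 0)
      + (∑ y : V, ∑ x : V, ∑ z : V, if r x y ∧ r y z ∧ r x z then 1 else 0) := by
    rw [← Finset.sum_add_distrib]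
    refine Finset.sum_congr rfl (fun y _ => ?_)
    rw [h1 y, ← Finset.sum_add_distrib]
    refine Finset.sum_congr rfl (fun x _ => ?_)
    rw [← Finset.sum_add_distrib]
    exact Finset.sum_congr rfl (fun z _ => h2 x y z)
  rw [h3, em3, tt3, Finset.sum_comm (f := fun y x => ∑ z : V, if r x y ∧ r y z ∧ r z x then (1:ℕ) else 0),
    Finset.sum_comm (f := fun y x => ∑ z : V, if r x y ∧ r y z ∧ r x z then (1:ℕ) else 0)]

include hasym htot in
private lemma tt3_count : 2 * tt3 r + ∑ x : V, outd r x = ∑ x : V, outd r x * outd r x := by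
  have key : ∀ x : V, outd r x * outd r x
      = 2 * (∑ y : V, ∑ z : V, if r x y ∧ r y z ∧ r x z then 1 else 0) + outd r x := by
    intro x
    have h1 : outd r x * outd r x = ∑ y : V, ∑ z : V, if r x y ∧ r x z then 1 else 0 := by
      rw [outd, Finset.sum_mul_sum]
      refine Finset.sum_congr rfl (fun y _ => Finset.sum_congr rfl (fun z _ => ?_))
      by_cases h : r x y <;> by_cases h' : r x z <;> simp [h, h']
    have h2 : ∀ y z : V, (if r x y ∧ r x z then (1:ℕ) else 0)
        = (if r x y ∧ r y z ∧ r x z then 1 else 0) + (if r x y ∧ r z y ∧ r x z then 1 else 0)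
          + (if y = z ∧ r x y then 1 else 0) := by
      intro y z
      by_cases hyz : y = z
      · subst hyz
        by_cases h : r x y
        · simp [h, hrr r hasym y]
        · simp [h]
      · by_cases h : r x y ∧ r x z
        · rcases htot y z hyz with h1 | h1
          · have h2 : ¬ r z y := hasym y z h1
            simp [h, h.1, h.2, h1, h2, hyz]
          · have h2 : ¬ r y z := hasym z y h1
            simp [h, h.1, h.2, h1, h2, hyz]
        · have hA : ¬ (r x y ∧ r y z ∧ r x z) := fun hh => h ⟨hh.1, hh.2.2⟩
          have hB : ¬ (r x y ∧ r z y ∧ r x z) := fun hh => h ⟨hh.1, hh.2.2⟩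
          simp [h, hA, hB, hyz]
    have h3 : outd r x * outd r x
        = (∑ y : V, ∑ z : V, if r x y ∧ r y z ∧ r x z then 1 else 0)
        + (∑ y : V, ∑ z : V, if r x y ∧ r z y ∧ r x z then 1 else 0)
        + (∑ y : V, ∑ z : V, if y = z ∧ r x y then 1 else 0) := by
      rw [h1, ← Finset.sum_add_distrib, ← Finset.sum_add_distrib]
      refine Finset.sum_congr rfl (fun y _ => ?_)
      rw [← Finset.sum_add_distrib, ← Finset.sum_add_distrib]
      exact Finset.sum_congr rfl (fun z _ => h2 y z)
    have h4 : (∑ y : V, ∑ z : V, if r x y ∧ r z y ∧ r x z then (1:ℕ) else 0)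
        = ∑ y : V, ∑ z : V, if r x y ∧ r y z ∧ r x z then 1 else 0 := by
      rw [Finset.sum_comm]
      refine Finset.sum_congr rfl (fun y _ => Finset.sum_congr rfl (fun z _ => ?_))
      refine if_congr ?_ rfl rfl
      tauto
    have h5 : (∑ y : V, ∑ z : V, if y = z ∧ r x y then (1:ℕ) else 0) = outd r x := by
      rw [outd]
      refine Finset.sum_congr rfl (fun y _ => ?_)
      by_cases h : r x y
      · simp [h, Finset.sum_ite_eq]
      · simp [h]
    rw [h3, h4, h5]
    ring
  have := Finset.sum_congr rfl (fun x (_ : x ∈ (Finset.univ : Finset V)) => key x)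
  rw [Finset.sum_add_distrib, ← Finset.mul_sum] at this
  rw [this, tt3]

end Aux

/-- If a tournament on `n = 4k+3` vertices has minimum codegree `δ₂(T) = (n+1)/4 = k+1`
(i.e. every pair lies in at least `k+1` cyclic triangles; by the general upper
bound this is the same as `δ₂(T) = k+1`), then every vertex has in- and
out-degree `(n-1)/2 = 2k+1` and every pair lies in exactly `k+1` cyclic triangles. -/
theorem stmt_6 {V : Type*} [Fintype V] [DecidableEq V] (k : ℕ)
    (hV : Fintype.card V = 4 * k + 3)
    (r : V → V → Prop) [DecidableRel r]
    (hasym : ∀ x y, r x y → ¬ r y x)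
    (htot : ∀ x y, x ≠ y → r x y ∨ r y x)
    (hδ : ∀ x y : V, x ≠ y →
      k + 1 ≤ (Finset.univ.filter (fun z => CycTri r x y z)).card) :
    (∀ v : V, (Finset.univ.filter (fun u => r u v)).card = 2 * k + 1 ∧
              (Finset.univ.filter (fun u => r v u)).card = 2 * k + 1) ∧
    (∀ v w : V, v ≠ w →
      (Finset.univ.filter (fun z => CycTri r v w z)).card = k + 1) := by
  classical
  have hcard_in : ∀ v, (Finset.univ.filter (fun u => r u v)).card = ind r v := by
    intro v; rw [ind, Finset.card_filter]
  have hcard_out : ∀ v, (Finset.univ.filter (fun u => r v u)).card = outd r v := by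
    intro v; rw [outd, Finset.card_filter]
  have hcard_cyc : ∀ v w, (Finset.univ.filter (fun z => CycTri r v w z)).card = cyc r v w := by
    intro v w; rw [cyc, Finset.card_filter]
  have hdeg : ∀ v : V, ind r v + outd r v + 1 = 4 * k + 3 := by
    intro v; rw [← hV]; exact deg_sum r hasym htot v
  -- total number of edges
  have hS1 : ∑ v : V, outd r v = (4 * k + 3) * (2 * k + 1) := by
    have h1 : ∑ v : V, (ind r v + outd r v + 1) = (4 * k + 3) * (4 * k + 3) := by
      rw [Finset.sum_congr rfl (fun v _ => hdeg v), Finset.sum_const, Finset.card_univ, hV,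
        smul_eq_mul]
    rw [Finset.sum_add_distrib, Finset.sum_add_distrib, sum_ind_eq r hasym,
      Finset.sum_const, Finset.card_univ, hV, smul_eq_mul, mul_one] at h1
    nlinarith [h1]
  -- key identity : 2 * em3 + 3 * Q = (8k+5) * S1
  have hPQ : (∑ v : V, ind r v * outd r v) + (∑ v : V, outd r v * outd r v)
      = (4 * k + 2) * ((4 * k + 3) * (2 * k + 1)) := by
    rw [← Finset.sum_add_distrib]
    have : ∀ v : V, ind r v * outd r v + outd r v * outd r v = (4 * k + 2) * outd r v := by
      intro v
      have := hdeg v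
      nlinarith [this]
    rw [Finset.sum_congr rfl (fun v _ => this v), ← Finset.mul_sum, hS1]
  have hkey : 2 * em3 r + 3 * (∑ v : V, outd r v * outd r v)
      = (8 * k + 5) * ((4 * k + 3) * (2 * k + 1)) := by
    have h1 := path_count r hasym htot
    have h2 := tt3_count r hasym htot
    rw [hS1] at h2
    -- 2*em3 + 3*Q = 2*(em3+tt3) + 2*Q + S1  where Q = 2*tt3 + S1
    nlinarith [h1, h2, hPQ]
  -- lower bound on the codegree sum
  have hlow : (4 * k + 3) * ((4 * k + 2) * (k + 1)) ≤ ∑ v : V, ∑ w : V, cyc r v w := by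
    have inner : ∀ v : V, (4 * k + 2) * (k + 1) ≤ ∑ w : V, cyc r v w := by
      intro v
      have h1 : ∑ w : V, (if w = v then 0 else (k + 1)) ≤ ∑ w : V, cyc r v w := by
        refine Finset.sum_le_sum (fun w _ => ?_)
        by_cases h : w = v
        · simp [h]
        · rw [if_neg h, ← hcard_cyc]
          exact hδ v w (Ne.symm h)
      have h2 : (∑ w : V, if w = v then (0:ℕ) else (k + 1))
          + (∑ w : V, if w = v then (k+1) else 0) = (4 * k + 3) * (k + 1) := by
        rw [← Finset.sum_add_distrib]
        have : ∀ w : V, ((if w = v then (0:ℕ) else (k+1)) + (if w = v then (k+1) else 0)) = k + 1 := by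
          intro w; by_cases h : w = v <;> simp [h]
        rw [Finset.sum_congr rfl (fun w _ => this w), Finset.sum_const, Finset.card_univ, hV,
          smul_eq_mul]
      have h3 : (∑ w : V, if w = v then (k+1:ℕ) else 0) = k + 1 := by
        simp [Finset.sum_ite_eq']
      have h4 : (∑ w : V, if w = v then (0:ℕ) else (k + 1)) = (4 * k + 2) * (k + 1) := by
        rw [h3] at h2
        have : (4 * k + 3) * (k + 1) = (4 * k + 2) * (k + 1) + (k + 1) := by ring
        omega
      omega
    calc (4 * k + 3) * ((4 * k + 2) * (k + 1))
        = ∑ _v : V, (4 * k + 2) * (k + 1) := by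
          rw [Finset.sum_const, Finset.card_univ, hV, smul_eq_mul]
      _ ≤ ∑ v : V, ∑ w : V, cyc r v w := Finset.sum_le_sum (fun v _ => inner v)
  rw [sum_cyc r hasym] at hlow
  -- upper bound on Q := ∑ outd²
  have hQle : (∑ v : V, outd r v * outd r v) ≤ (4 * k + 3) * ((2 * k + 1) * (2 * k + 1)) := by
    nlinarith [hkey, hlow]
  -- regularity via sum of squares in ℤ
  have hout : ∀ v : V, outd r v = 2 * k + 1 := by
    have hz : ∑ v : V, ((outd r v : ℤ) - (2 * k + 1)) ^ 2
        = ((∑ v : V, outd r v * outd r v : ℕ) : ℤ)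
          - ((4 * k + 3) : ℤ) * (((2 * k + 1) : ℤ) * ((2 * k + 1) : ℤ)) := by
      have e1 : ∀ v : V, ((outd r v : ℤ) - (2 * k + 1)) ^ 2
          = (outd r v : ℤ) * (outd r v : ℤ) - (2 * (2 * k + 1)) * (outd r v : ℤ)
            + (2 * k + 1) ^ 2 := by intro v; ring
      rw [Finset.sum_congr rfl (fun v _ => e1 v), Finset.sum_add_distrib,
        Finset.sum_sub_distrib, ← Finset.mul_sum, Finset.sum_const, Finset.card_univ, hV]
      have c1 : (∑ v : V, (outd r v : ℤ) * (outd r v : ℤ))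
          = ((∑ v : V, outd r v * outd r v : ℕ) : ℤ) := by push_cast; ring
      have c2 : (∑ v : V, (outd r v : ℤ)) = ((4 * k + 3) * (2 * k + 1) : ℤ) := by
        rw [← Nat.cast_sum, hS1]; push_cast; ring
      rw [c1, c2]
      push_cast
      ring
    have hle0 : ∑ v : V, ((outd r v : ℤ) - (2 * k + 1)) ^ 2 ≤ 0 := by
      rw [hz]
      have : ((∑ v : V, outd r v * outd r v : ℕ) : ℤ)
          ≤ ((4 * k + 3) * ((2 * k + 1) * (2 * k + 1)) : ℕ) := by exact_mod_cast hQle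
      push_cast at this ⊢
      linarith
    have hzero : ∀ v ∈ (Finset.univ : Finset V), ((outd r v : ℤ) - (2 * k + 1)) ^ 2 = 0 := by
      rw [← Finset.sum_eq_zero_iff_of_nonneg (fun v _ => sq_nonneg _)]
      have hge : (0:ℤ) ≤ ∑ v : V, ((outd r v : ℤ) - (2 * k + 1)) ^ 2 :=
        Finset.sum_nonneg (fun v _ => sq_nonneg _)
      omega
    intro v
    have := hzero v (Finset.mem_univ v)
    have h2 : (outd r v : ℤ) = 2 * k + 1 := by
      have := sq_eq_zero_iff.mp this
      linarith
    exact_mod_cast h2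
  have hin : ∀ v : V, ind r v = 2 * k + 1 := by
    intro v; have := hdeg v; have := hout v; omega
  -- now Q is exact, so 2 * em3 is exact
  have hQ : (∑ v : V, outd r v * outd r v) = (4 * k + 3) * ((2 * k + 1) * (2 * k + 1)) := by
    rw [Finset.sum_congr rfl (fun v _ => by rw [hout v]), Finset.sum_const, Finset.card_univ, hV,
      smul_eq_mul]
  have h2M : 2 * em3 r = (4 * k + 3) * ((4 * k + 2) * (k + 1)) := by
    rw [hQ] at hkey
    nlinarith [hkey]
  -- extract equality for every pair
  have hpair : ∀ v w : V, v ≠ w → cyc r v w = k + 1 := by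
    have hsum : ∑ p ∈ (Finset.univ ×ˢ Finset.univ : Finset (V × V)),
        (if p.1 = p.2 then 0 else (k+1))
        = ∑ p ∈ (Finset.univ ×ˢ Finset.univ : Finset (V × V)), cyc r p.1 p.2 := by
      have hL : ∑ p ∈ (Finset.univ ×ˢ Finset.univ : Finset (V × V)),
          (if p.1 = p.2 then (0:ℕ) else (k+1)) = (4 * k + 3) * ((4 * k + 2) * (k + 1)) := by
        rw [Finset.sum_product]
        have inner : ∀ v : V, (∑ w : V, if v = w then (0:ℕ) else (k+1)) = (4*k+2)*(k+1) := by
          intro v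
          have h3 : (∑ w : V, if v = w then (k+1:ℕ) else 0) = k + 1 := by
            simp [Finset.sum_ite_eq]
          have h2 : (∑ w : V, if v = w then (0:ℕ) else (k + 1))
              + (∑ w : V, if v = w then (k+1) else 0) = (4 * k + 3) * (k + 1) := by
            rw [← Finset.sum_add_distrib]
            have : ∀ w : V, ((if v = w then (0:ℕ) else (k+1)) + (if v = w then (k+1) else 0)) = k + 1 := by
              intro w; by_cases h : v = w <;> simp [h]
            rw [Finset.sum_congr rfl (fun w _ => this w), Finset.sum_const, Finset.card_univ, hV,
              smul_eq_mul]
          rw [h3] at h2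
          have : (4 * k + 3) * (k + 1) = (4 * k + 2) * (k + 1) + (k + 1) := by ring
          omega
        rw [Finset.sum_congr rfl (fun v _ => inner v), Finset.sum_const, Finset.card_univ, hV,
          smul_eq_mul]
      have hR : ∑ p ∈ (Finset.univ ×ˢ Finset.univ : Finset (V × V)), cyc r p.1 p.2
          = (4 * k + 3) * ((4 * k + 2) * (k + 1)) := by
        rw [Finset.sum_product, sum_cyc r hasym, h2M]
      rw [hL, hR]
    have hle : ∀ p ∈ (Finset.univ ×ˢ Finset.univ : Finset (V × V)),
        (if p.1 = p.2 then 0 else (k+1)) ≤ cyc r p.1 p.2 := by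
      rintro ⟨v, w⟩ _
      by_cases h : v = w
      · simp [h]
      · simpa [h, ← hcard_cyc] using hδ v w h
    intro v w hvw
    have := (Finset.sum_eq_sum_iff_of_le hle).mp hsum (v, w)
      (Finset.mem_product.mpr ⟨Finset.mem_univ v, Finset.mem_univ w⟩)
    simpa [hvw] using this.symm
  refine ⟨fun v => ⟨by rw [hcard_in, hin], by rw [hcard_out, hout]⟩, fun v w hvw => ?_⟩
  rw [hcard_cyc]
  exact hpair v w hvw
end

section
/- Every Hadamard matrix (an n×n ±1 matrix H with HHᵀ = n·I) has order n = 1, n = 2, or n divisible by 4. -/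
open Matrix

lemma hadamard_aux (n : ℕ) (hn3 : 3 ≤ n) (H : Matrix (Fin n) (Fin n) ℝ)
    (hpm : ∀ i j, H i j = 1 ∨ H i j = -1)
    (hHH : H * Hᵀ = (n : ℝ) • (1 : Matrix (Fin n) (Fin n) ℝ)) :
    4 ∣ n := by
  have horth : ∀ i k : Fin n, i ≠ k → ∑ j, H i j * H k j = 0 := by
    intro i k hik
    have h := congrFun (congrFun hHH i) k
    simpa [Matrix.mul_apply, Matrix.one_apply, hik] using h
  have h03 : (0 : ℕ) < n := by omega
  have h13 : (1 : ℕ) < n := by omega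
  have h23 : (2 : ℕ) < n := by omega
  set i0 : Fin n := ⟨0, h03⟩ with hi0
  set i1 : Fin n := ⟨1, h13⟩ with hi1
  set i2 : Fin n := ⟨2, h23⟩ with hi2
  set t : Fin n → ℝ := fun j => (1 + H i0 j * H i1 j) * (1 + H i0 j * H i2 j) with ht
  have hterm : ∀ j, t j = 1 + H i0 j * H i1 j + H i0 j * H i2 j + H i1 j * H i2 j := by
    intro j
    rcases hpm i0 j with h | h <;> simp only [ht] <;> rw [h] <;> ring
  have hsum : ∑ j, t j = n := by
    calc ∑ j, t j
        = ∑ j, (1 + H i0 j * H i1 j + H i0 j * H i2 j + H i1 j * H i2 j) :=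
          Finset.sum_congr rfl fun j _ => hterm j
      _ = (n : ℝ) + (∑ j, H i0 j * H i1 j) + (∑ j, H i0 j * H i2 j)
            + (∑ j, H i1 j * H i2 j) := by
          simp [Finset.sum_add_distrib]
      _ = n := by
          rw [horth i0 i1 (by simp [hi0, hi1, Fin.ext_iff]),
             horth i0 i2 (by simp [hi0, hi2, Fin.ext_iff]),
             horth i1 i2 (by simp [hi1, hi2, Fin.ext_iff])]
          ring
  have ht4 : ∀ j, t j = 0 ∨ t j = 4 := by
    intro j
    rcases hpm i0 j with h0 | h0 <;> rcases hpm i1 j with h1 | h1 <;>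
      rcases hpm i2 j with h2 | h2 <;> simp only [ht] <;> rw [h0, h1, h2] <;> norm_num
  set S : Finset (Fin n) := Finset.univ.filter (fun j => t j = 4) with hS
  have hsum2 : ∑ j, t j = 4 * S.card := by
    rw [← Finset.sum_filter_add_sum_filter_not Finset.univ (fun j => t j = 4)]
    have h1 : ∑ j ∈ Finset.univ.filter (fun j => t j = 4), t j = 4 * S.card := by
      rw [Finset.sum_congr rfl (fun j hj => (Finset.mem_filter.mp hj).2)]
      simp [hS, mul_comm]
    have h2 : ∑ j ∈ Finset.univ.filter (fun j => ¬ t j = 4), t j = 0 := by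
      apply Finset.sum_eq_zero
      intro j hj
      rcases ht4 j with h | h
      · exact h
      · exact absurd h (Finset.mem_filter.mp hj).2
    rw [h1, h2, add_zero]
  refine ⟨S.card, ?_⟩
  have : (n : ℝ) = ((4 * S.card : ℕ) : ℝ) := by
    push_cast
    rw [← hsum, hsum2]
  exact_mod_cast this

/-- Every Hadamard matrix (an `n×n` `±1` matrix `H` with `HHᵀ = n·I`) has
order `n = 1`, `n = 2`, or `n` divisible by `4`. -/
theorem stmt_11 (n : ℕ) (H : Matrix (Fin n) (Fin n) ℝ)
    (hpm : ∀ i j, H i j = 1 ∨ H i j = -1)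
    (hHH : H * Hᵀ = (n : ℝ) • (1 : Matrix (Fin n) (Fin n) ℝ)) :
    n = 1 ∨ n = 2 ∨ 4 ∣ n := by
  rcases Nat.lt_or_ge n 3 with h | h
  · interval_cases n
    · exact Or.inr (Or.inr (dvd_zero 4))
    · exact Or.inl rfl
    · exact Or.inr (Or.inl rfl)
  · exact Or.inr (Or.inr (hadamard_aux n h H hpm hHH))
end

section
/- Let T be a tournament on n = 4k+3 vertices in which every pair {v,w} satisfies C_T(v,w) ≥ k+1 and every arc satisfies R_T(v,w) ≥ k (as holds when δ₂(T) = k+1, by codegree-regularity). Fix a vertex x and form T⁺ on n+1 vertices by adding a new vertex y with the arc between x and y oriented arbitrarily, and for every other vertex v orienting the pair {v,y} oppositely to {v,x} (i.e., if v→x in T then y→v in T⁺, and if x→v then v→y). Then δ₂(T⁺) ≥ k. -/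
open Finset
set_option linter.unusedSectionVars false

section Aux
variable {V : Type*} [Fintype V] [DecidableEq V] (r : V → V → Prop) [DecidableRel r]

lemma arc_pairs_card (hasym : ∀ x y, r x y → ¬ r y x)
    (htot : ∀ x y, x ≠ y → r x y ∨ r y x) (S : Finset V) :
    ((S ×ˢ S).filter (fun p => r p.1 p.2)).card * 2 + S.card = S.card * S.card := by
  have hirr : ∀ v, ¬ r v v := fun v h => hasym v v h h
  set P := (S ×ˢ S).filter (fun p => r p.1 p.2) with hP
  set Q := (S ×ˢ S).filter (fun p => r p.2 p.1) with hQ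
  have hPQ : P.card = Q.card := by
    have : Q = P.image Prod.swap := by
      ext p
      simp only [hP, hQ, Finset.mem_image, mem_filter, mem_product]
      constructor
      · rintro ⟨⟨h1, h2⟩, h3⟩
        exact ⟨p.swap, ⟨⟨h2, h1⟩, h3⟩, Prod.swap_swap p⟩
      · rintro ⟨q, ⟨⟨h1, h2⟩, h3⟩, rfl⟩
        exact ⟨⟨h2, h1⟩, h3⟩
    rw [this, Finset.card_image_of_injective _ Prod.swap_injective]
  have hdisj : Disjoint P Q := by
    rw [Finset.disjoint_left]
    intro p hp hq
    simp only [hP, hQ, mem_filter] at hp hq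
    exact hasym _ _ hp.2 hq.2
  have hunion : P ∪ Q = S.offDiag := by
    ext p
    simp only [hP, hQ, mem_union, mem_filter, mem_product, Finset.mem_offDiag]
    constructor
    · rintro (⟨⟨h1, h2⟩, h3⟩ | ⟨⟨h1, h2⟩, h3⟩)
      · exact ⟨h1, h2, fun h => hirr _ (h ▸ h3)⟩
      · exact ⟨h1, h2, fun h => hirr _ (h ▸ h3)⟩
    · rintro ⟨h1, h2, h3⟩
      rcases htot p.1 p.2 h3 with h | h
      · exact Or.inl ⟨⟨h1, h2⟩, h⟩
      · exact Or.inr ⟨⟨h1, h2⟩, h⟩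
  have hcard : P.card + Q.card = S.offDiag.card := by
    rw [← hunion, Finset.card_union_of_disjoint hdisj]
  have hoff : S.offDiag.card = S.card * S.card - S.card := Finset.offDiag_card S
  have hle : S.card ≤ S.card * S.card := by nlinarith [Nat.zero_le S.card]
  omega


lemma dp_add_dm (hasym : ∀ x y, r x y → ¬ r y x)
    (htot : ∀ x y, x ≠ y → r x y ∨ r y x) (v : V) :
    (univ.filter (fun z => r v z)).card + (univ.filter (fun z => r z v)).card + 1
      = Fintype.card V := by
  have hirr : ∀ u : V, ¬ r u u := fun u h => hasym u u h h
  have h1 : (univ.filter (fun z => ¬ r v z)) = (univ.filter (fun z => r z v)) ∪ {v} := by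
    ext z
    simp only [mem_filter, mem_union, mem_singleton, mem_univ, true_and]
    constructor
    · intro h
      by_cases hz : z = v
      · exact Or.inr hz
      · rcases htot v z (fun hh => hz hh.symm) with h' | h'
        · exact absurd h' h
        · exact Or.inl h'
    · rintro (h | rfl)
      · exact hasym _ _ h
      · exact hirr _
  have h2 : ((univ.filter (fun z => r z v)) ∪ {v}).card
      = (univ.filter (fun z => r z v)).card + 1 := by
    rw [Finset.card_union_of_disjoint]
    · simp
    · simp only [Finset.disjoint_singleton_right, mem_filter]
      exact fun h => hirr v h.2
  have h3 := Finset.card_filter_add_card_filter_not (s := univ)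
    (p := fun z => r v z)
  rw [h1, h2] at h3
  rw [Finset.card_univ] at h3
  omega

lemma double_count (E : Finset (V × V)) (Q : V → V × V → Prop)
    [∀ z p, Decidable (Q z p)] :
    ∑ p ∈ E, (univ.filter (fun z => Q z p)).card
      = ∑ z : V, (E.filter (fun p => Q z p)).card := by
  simp only [Finset.card_filter]
  exact Finset.sum_comm

lemma card_arcs_out :
    (univ.filter (fun p : V × V => r p.1 p.2)).card
      = ∑ z : V, (univ.filter (fun w => r z w)).card := by
  rw [Finset.card_filter, ← Finset.univ_product_univ, Finset.sum_product]
  simp only [Finset.card_filter]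

lemma card_arcs_in :
    (univ.filter (fun p : V × V => r p.1 p.2)).card
      = ∑ z : V, (univ.filter (fun w => r w z)).card := by
  rw [Finset.card_filter, ← Finset.univ_product_univ, Finset.sum_product]
  rw [Finset.sum_comm]
  simp only [Finset.card_filter]

lemma cyc_eq (hasym : ∀ x y, r x y → ¬ r y x) {u w : V} (huw : r u w) :
    univ.filter (fun z => CycTri r u w z) = univ.filter (fun z => r w z ∧ r z u) := by
  ext z
  simp only [mem_filter, mem_univ, true_and, CycTri]
  constructor
  · rintro (⟨_, h2, h3⟩ | ⟨h1, _, _⟩)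
    · exact ⟨h2, h3⟩
    · exact absurd huw (hasym _ _ h1)
  · rintro ⟨h2, h3⟩
    exact Or.inl ⟨huw, h2, h3⟩

lemma four_split (hasym : ∀ x y, r x y → ¬ r y x)
    (htot : ∀ x y, x ≠ y → r x y ∨ r y x) {u w : V} (huw : r u w) :
    (univ.filter (fun z => r w z ∧ r z u)).card
    + (univ.filter (fun z => r u z ∧ r z w)).card
    + (univ.filter (fun z => r u z ∧ r w z)).card
    + (univ.filter (fun z => r z u ∧ r z w)).card
    + 2 = Fintype.card V := by
  have hirr : ∀ v : V, ¬ r v v := fun v h => hasym v v h h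
  have hne : u ≠ w := fun h => hirr u (h ▸ huw)
  have key : ∀ z : V,
      ((if r w z ∧ r z u then 1 else 0) + (if r u z ∧ r z w then 1 else 0)
      + (if r u z ∧ r w z then 1 else 0) + (if r z u ∧ r z w then 1 else 0)
      + (if z = u then 1 else 0) + (if z = w then 1 else 0) : ℕ) = 1 := by
    intro z
    rcases eq_or_ne z u with rfl | hzu
    · simp [hirr, hne, hne.symm, hasym _ _ huw]
    · rcases eq_or_ne z w with rfl | hzw
      · simp [hirr, hne.symm, hzu, hasym _ _ huw]
      · rcases htot z u hzu with h | h <;> rcases htot z w hzw with h' | h' <;>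
          simp [h, h', hasym _ _ h, hasym _ _ h', hzu, hzw]
  have hsum := Finset.sum_congr rfl (fun z (_ : z ∈ (univ : Finset V)) => key z)
  simp only [Finset.sum_add_distrib, Finset.sum_ite_eq', Finset.mem_univ, if_true,
    Finset.sum_const, Finset.card_univ, smul_eq_mul, mul_one] at hsum
  simp only [Finset.card_filter]
  omega

lemma out_split (hasym : ∀ x y, r x y → ¬ r y x)
    (htot : ∀ x y, x ≠ y → r x y ∨ r y x) {u w : V} (huw : r u w) :
    (univ.filter (fun z => r w z)).card
      = (univ.filter (fun z => r w z ∧ r z u)).card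
      + (univ.filter (fun z => r u z ∧ r w z)).card := by
  have hirr : ∀ v : V, ¬ r v v := fun v h => hasym v v h h
  have key : ∀ z : V,
      ((if r w z then 1 else 0) : ℕ)
        = (if r w z ∧ r z u then 1 else 0) + (if r u z ∧ r w z then 1 else 0) := by
    intro z
    by_cases h : r w z
    · have hzu : z ≠ u := fun e => hasym _ _ huw (e ▸ h)
      rcases htot z u hzu with h' | h' <;> simp [h, h', hasym _ _ h']
    · simp [h]
  simp only [Finset.card_filter]
  rw [← Finset.sum_add_distrib]
  exact Finset.sum_congr rfl (fun z _ => key z)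

lemma in_split (hasym : ∀ x y, r x y → ¬ r y x)
    (htot : ∀ x y, x ≠ y → r x y ∨ r y x) {u w : V} (huw : r u w) :
    (univ.filter (fun z => r z u)).card
      = (univ.filter (fun z => r w z ∧ r z u)).card
      + (univ.filter (fun z => r z u ∧ r z w)).card := by
  have hirr : ∀ v : V, ¬ r v v := fun v h => hasym v v h h
  have key : ∀ z : V,
      ((if r z u then 1 else 0) : ℕ)
        = (if r w z ∧ r z u then 1 else 0) + (if r z u ∧ r z w then 1 else 0) := by
    intro z
    by_cases h : r z u
    · have hzw : z ≠ w := fun e => hasym _ _ huw (e ▸ h)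
      rcases htot z w hzw with h' | h' <;> simp [h, h', hasym _ _ h']
    · simp [h]
  simp only [Finset.card_filter]
  rw [← Finset.sum_add_distrib]
  exact Finset.sum_congr rfl (fun z _ => key z)

end Aux
/-- Let `T` be a tournament on `n = 4k+3` vertices in which every pair lies in
at least `k+1` cyclic triangles and every arc `v → w` has `R_T(v,w) ≥ k`.
Form `T⁺` on `n+1` vertices (vertex set `Option V`, new vertex `y = none`) by
fixing `x : V`, orienting the pair `{x,y}` arbitrarily, and orienting every
other pair `{v,y}` oppositely to `{v,x}`. Then `δ₂(T⁺) ≥ k`. -/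
theorem stmt_14 {V : Type*} [Fintype V] [DecidableEq V] (k : ℕ)
    (hV : Fintype.card V = 4 * k + 3)
    (r : V → V → Prop) [DecidableRel r]
    (hasym : ∀ x y, r x y → ¬ r y x)
    (htot : ∀ x y, x ≠ y → r x y ∨ r y x)
    (hC : ∀ v w : V, v ≠ w →
      k + 1 ≤ (Finset.univ.filter (fun z => CycTri r v w z)).card)
    (hR : ∀ v w : V, r v w →
      k ≤ (Finset.univ.filter (fun z => r v z ∧ r z w)).card)
    (x : V)
    (r' : Option V → Option V → Prop) [DecidableRel r']
    (hasym' : ∀ a b, r' a b → ¬ r' b a)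
    (htot' : ∀ a b, a ≠ b → r' a b ∨ r' b a)
    (hext : ∀ u v : V, r' (some u) (some v) ↔ r u v)
    (hy₁ : ∀ v : V, v ≠ x → (r' (some v) none ↔ r x v))
    (hy₂ : ∀ v : V, v ≠ x → (r' none (some v) ↔ r v x)) :
    ∀ a b : Option V, a ≠ b →
      k ≤ (Finset.univ.filter (fun z => CycTri r' a b z)).card := by
  classical
  have hirr : ∀ v : V, ¬ r v v := fun v h => hasym v v h h
  -- degree sum
  have hdpm : ∀ v : V, (univ.filter (fun z => r v z)).card
      + (univ.filter (fun z => r z v)).card + 1 = 4*k+3 := fun v => by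
    rw [← hV]; exact dp_add_dm r hasym htot v
  -- number of arcs
  have hA : (univ.filter (fun p : V × V => r p.1 p.2)).card = (4*k+3) * (2*k+1) := by
    have h := arc_pairs_card r hasym htot (univ : Finset V)
    rw [Finset.univ_product_univ, Finset.card_univ, hV] at h
    have e : (4*k+3) * (4*k+3) = ((4*k+3) * (2*k+1)) * 2 + (4*k+3) := by ring
    omega
  have hEdp : (univ.filter (fun p : V × V => r p.1 p.2)).card
      = ∑ z : V, (univ.filter (fun w => r z w)).card := card_arcs_out r
  have hEdm : (univ.filter (fun p : V × V => r p.1 p.2)).card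
      = ∑ z : V, (univ.filter (fun w => r w z)).card := card_arcs_in r
  -- double counting of common in-neighbours
  have hSI : (∑ p ∈ univ.filter (fun p : V × V => r p.1 p.2),
        (univ.filter (fun z => r z p.1 ∧ r z p.2)).card) * 2
      + (univ.filter (fun p : V × V => r p.1 p.2)).card
      = ∑ z : V, (univ.filter (fun w => r z w)).card
          * (univ.filter (fun w => r z w)).card := by
    rw [double_count, hEdp]
    have hz : ∀ z : V, ((univ.filter (fun p : V × V => r p.1 p.2)).filter
          (fun p => r z p.1 ∧ r z p.2)).card
        = (((univ.filter (fun w => r z w)) ×ˢ (univ.filter (fun w => r z w))).filter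
            (fun p => r p.1 p.2)).card := by
      intro z
      congr 1
      ext p
      simp only [mem_filter, Finset.mem_product, mem_univ, true_and]
      tauto
    rw [Finset.sum_congr rfl (fun z _ => hz z), Finset.sum_mul, ← Finset.sum_add_distrib]
    exact Finset.sum_congr rfl (fun z _ => arc_pairs_card r hasym htot _)
  -- double counting of common out-neighbours
  have hSO : (∑ p ∈ univ.filter (fun p : V × V => r p.1 p.2),
        (univ.filter (fun z => r p.1 z ∧ r p.2 z)).card) * 2
      + (univ.filter (fun p : V × V => r p.1 p.2)).card
      = ∑ z : V, (univ.filter (fun w => r w z)).card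
          * (univ.filter (fun w => r w z)).card := by
    rw [double_count, hEdm]
    have hz : ∀ z : V, ((univ.filter (fun p : V × V => r p.1 p.2)).filter
          (fun p => r p.1 z ∧ r p.2 z)).card
        = (((univ.filter (fun w => r w z)) ×ˢ (univ.filter (fun w => r w z))).filter
            (fun p => r p.1 p.2)).card := by
      intro z
      congr 1
      ext p
      simp only [mem_filter, Finset.mem_product, mem_univ, true_and]
      tauto
    rw [Finset.sum_congr rfl (fun z _ => hz z), Finset.sum_mul, ← Finset.sum_add_distrib]
    exact Finset.sum_congr rfl (fun z _ => arc_pairs_card r hasym htot _)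
  -- pointwise bound on Os + Is
  have hfb : ∀ p ∈ univ.filter (fun p : V × V => r p.1 p.2),
      (univ.filter (fun z => r p.1 z ∧ r p.2 z)).card
      + (univ.filter (fun z => r z p.1 ∧ r z p.2)).card ≤ 2*k := by
    rintro ⟨u, w⟩ hp
    have huw : r u w := (mem_filter.mp hp).2
    have h4 := four_split r hasym htot huw
    rw [hV] at h4
    have hCs := hC u w (fun e => hirr u (e ▸ huw))
    rw [cyc_eq r hasym huw] at hCs
    have hRs := hR u w huw
    dsimp only
    omega
  have hsumf : ∑ p ∈ univ.filter (fun p : V × V => r p.1 p.2),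
      ((univ.filter (fun z => r p.1 z ∧ r p.2 z)).card
       + (univ.filter (fun z => r z p.1 ∧ r z p.2)).card)
      ≤ 2*k * ((4*k+3) * (2*k+1)) := by
    calc _ ≤ ∑ _p ∈ univ.filter (fun p : V × V => r p.1 p.2), 2*k :=
          Finset.sum_le_sum hfb
      _ = _ := by rw [Finset.sum_const, smul_eq_mul, hA]; ring
  -- regularity via sum of squares
  have hsq : ∑ v : V, ((((univ.filter (fun z => r v z)).card : ℤ) - (2*k+1))^2
      + (((univ.filter (fun z => r z v)).card : ℤ) - (2*k+1))^2) ≤ 0 := by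
    have e1 : ∀ v : V, ((((univ.filter (fun z => r v z)).card : ℤ) - (2*k+1))^2
        + (((univ.filter (fun z => r z v)).card : ℤ) - (2*k+1))^2)
        = (((univ.filter (fun z => r v z)).card : ℤ) * (univ.filter (fun z => r v z)).card
          + ((univ.filter (fun z => r z v)).card : ℤ) * (univ.filter (fun z => r z v)).card)
          - (2*(2*k+1)) * (((univ.filter (fun z => r v z)).card : ℤ)
            + ((univ.filter (fun z => r z v)).card : ℤ))
          + 2*((2*(k:ℤ)+1))^2 := fun v => by ring
    rw [Finset.sum_congr rfl (fun v _ => e1 v), Finset.sum_add_distrib,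
      Finset.sum_sub_distrib, Finset.sum_add_distrib, ← Finset.mul_sum,
      Finset.sum_add_distrib, Finset.sum_const, Finset.card_univ, hV]
    have c1 : ∑ v : V, (((univ.filter (fun z => r v z)).card : ℤ)
        * (univ.filter (fun z => r v z)).card)
        = ((∑ z : V, (univ.filter (fun w => r z w)).card
            * (univ.filter (fun w => r z w)).card : ℕ) : ℤ) := by push_cast; rfl
    have c2 : ∑ v : V, (((univ.filter (fun z => r z v)).card : ℤ)
        * (univ.filter (fun z => r z v)).card)
        = ((∑ z : V, (univ.filter (fun w => r w z)).card
            * (univ.filter (fun w => r w z)).card : ℕ) : ℤ) := by push_cast; rfl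
    have c3 : ∑ v : V, (((univ.filter (fun z => r v z)).card : ℤ))
        = (((univ.filter (fun p : V × V => r p.1 p.2)).card : ℕ) : ℤ) := by
      rw [hEdp]; push_cast; rfl
    have c4 : ∑ v : V, (((univ.filter (fun z => r z v)).card : ℤ))
        = (((univ.filter (fun p : V × V => r p.1 p.2)).card : ℕ) : ℤ) := by
      rw [hEdm]; push_cast; rfl
    rw [c1, c2, c3, c4, ← hSI, ← hSO, hA]
    have hsplit : ∑ p ∈ univ.filter (fun p : V × V => r p.1 p.2),
        ((univ.filter (fun z => r p.1 z ∧ r p.2 z)).card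
         + (univ.filter (fun z => r z p.1 ∧ r z p.2)).card)
        = (∑ p ∈ univ.filter (fun p : V × V => r p.1 p.2),
            (univ.filter (fun z => r p.1 z ∧ r p.2 z)).card)
          + (∑ p ∈ univ.filter (fun p : V × V => r p.1 p.2),
            (univ.filter (fun z => r z p.1 ∧ r z p.2)).card) := Finset.sum_add_distrib
    rw [hsplit] at hsumf
    have hZ : (∑ p ∈ univ.filter (fun p : V × V => r p.1 p.2),
          (((univ.filter (fun z => r p.1 z ∧ r p.2 z)).card : ℤ)))
        + (∑ p ∈ univ.filter (fun p : V × V => r p.1 p.2),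
          (((univ.filter (fun z => r z p.1 ∧ r z p.2)).card : ℤ)))
        ≤ 2*(k:ℤ)*((4*(k:ℤ)+3)*(2*(k:ℤ)+1)) := by exact_mod_cast hsumf
    push_cast [nsmul_eq_mul]
    linarith [hZ]
  -- each vertex has out/in degree 2k+1
  have hreg : ∀ v : V, (univ.filter (fun z => r v z)).card = 2*k+1
      ∧ (univ.filter (fun z => r z v)).card = 2*k+1 := by
    have hnn : ∀ v ∈ (univ : Finset V),
        (0:ℤ) ≤ (((univ.filter (fun z => r v z)).card : ℤ) - (2*k+1))^2
          + (((univ.filter (fun z => r z v)).card : ℤ) - (2*k+1))^2 := by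
      intro v _; positivity
    have hzero := (Finset.sum_eq_zero_iff_of_nonneg hnn).mp
      (le_antisymm hsq (Finset.sum_nonneg hnn))
    intro v
    have h0 := hzero v (mem_univ v)
    have h1 : (((univ.filter (fun z => r v z)).card : ℤ) - (2*k+1)) = 0 := by
      nlinarith [sq_nonneg (((univ.filter (fun z => r v z)).card : ℤ) - (2*k+1)),
        sq_nonneg (((univ.filter (fun z => r z v)).card : ℤ) - (2*k+1))]
    have h2 : (((univ.filter (fun z => r z v)).card : ℤ) - (2*k+1)) = 0 := by
      nlinarith [sq_nonneg (((univ.filter (fun z => r v z)).card : ℤ) - (2*k+1)),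
        sq_nonneg (((univ.filter (fun z => r z v)).card : ℤ) - (2*k+1))]
    constructor
    · have : ((univ.filter (fun z => r v z)).card : ℤ) = 2*k+1 := by linarith
      exact_mod_cast this
    · have : ((univ.filter (fun z => r z v)).card : ℤ) = 2*k+1 := by linarith
      exact_mod_cast this
  -- sums of squares of degrees are exactly n(2k+1)^2, hence SI = SO = kA
  have hdsq : ∑ z : V, (univ.filter (fun w => r z w)).card
      * (univ.filter (fun w => r z w)).card = (4*k+3) * ((2*k+1)*(2*k+1)) := by
    rw [Finset.sum_congr rfl (fun z _ => by rw [(hreg z).1]), Finset.sum_const,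
      Finset.card_univ, hV, smul_eq_mul]
  have hdsq' : ∑ z : V, (univ.filter (fun w => r w z)).card
      * (univ.filter (fun w => r w z)).card = (4*k+3) * ((2*k+1)*(2*k+1)) := by
    rw [Finset.sum_congr rfl (fun z _ => by rw [(hreg z).2]), Finset.sum_const,
      Finset.card_univ, hV, smul_eq_mul]
  have hSIval : ∑ p ∈ univ.filter (fun p : V × V => r p.1 p.2),
      (univ.filter (fun z => r z p.1 ∧ r z p.2)).card = k * ((4*k+3) * (2*k+1)) := by
    rw [hdsq] at hSI
    have e : (4*k+3) * ((2*k+1)*(2*k+1))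
        = (k * ((4*k+3) * (2*k+1))) * 2 + (4*k+3) * (2*k+1) := by ring
    omega
  have hSOval : ∑ p ∈ univ.filter (fun p : V × V => r p.1 p.2),
      (univ.filter (fun z => r p.1 z ∧ r p.2 z)).card = k * ((4*k+3) * (2*k+1)) := by
    rw [hdsq'] at hSO
    have e : (4*k+3) * ((2*k+1)*(2*k+1))
        = (k * ((4*k+3) * (2*k+1))) * 2 + (4*k+3) * (2*k+1) := by ring
    omega
  -- pointwise equality Os + Is = 2k on every arc
  have hf : ∀ p ∈ univ.filter (fun p : V × V => r p.1 p.2),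
      (univ.filter (fun z => r p.1 z ∧ r p.2 z)).card
      + (univ.filter (fun z => r z p.1 ∧ r z p.2)).card = 2*k := by
    by_contra hcon
    push_neg at hcon
    obtain ⟨p, hp, hne⟩ := hcon
    have hslt := Finset.sum_lt_sum hfb ⟨p, hp, lt_of_le_of_ne (hfb p hp) hne⟩
    rw [Finset.sum_const, smul_eq_mul, hA, Finset.sum_add_distrib, hSIval, hSOval] at hslt
    have e : k * ((4*k+3) * (2*k+1)) + k * ((4*k+3) * (2*k+1))
        = (4*k+3) * (2*k+1) * (2*k) := by ring
    omega
  -- per-arc: both common-neighbour counts are exactly k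
  have harc : ∀ u w : V, r u w →
      (univ.filter (fun z => r u z ∧ r w z)).card = k
      ∧ (univ.filter (fun z => r z u ∧ r z w)).card = k := by
    intro u w huw
    have hp : (u, w) ∈ univ.filter (fun p : V × V => r p.1 p.2) :=
      mem_filter.mpr ⟨mem_univ _, huw⟩
    have h2 := hf _ hp
    dsimp only at h2
    have ho := out_split r hasym htot huw
    have hi := in_split r hasym htot huw
    have hdw := (hreg w).1
    have hdu := (hreg u).2
    omega
  -- generic image lemma
  have himg : ∀ (S : Finset V) (a b : Option V), (∀ w ∈ S, CycTri r' a b (some w)) →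
      S.card ≤ (univ.filter (fun z => CycTri r' a b z)).card := by
    intro S a b hS
    have hsub : S.image some ⊆ univ.filter (fun z => CycTri r' a b z) := by
      intro z hz
      simp only [Finset.mem_image] at hz
      obtain ⟨w, hw, rfl⟩ := hz
      exact mem_filter.mpr ⟨mem_univ _, hS w hw⟩
    calc S.card = (S.image some).card :=
          (Finset.card_image_of_injective _ (Option.some_injective V)).symm
      _ ≤ _ := Finset.card_le_card hsub
  -- main estimate for pairs {v, y}
  have key1 : ∀ v : V, k ≤ (univ.filter (fun z => CycTri r' (some v) none z)).card := by
    intro v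
    rcases eq_or_ne v x with rfl | hvx
    · rcases htot' (some v) none (by simp) with h | h
      · refine le_trans ?_ (himg (univ.filter (fun w => r w v)) _ _ ?_)
        · rw [(hreg v).2]; omega
        · intro w hw
          have hwv : r w v := (mem_filter.mp hw).2
          have hwx : w ≠ v := fun e => hirr v (e ▸ hwv)
          exact Or.inl ⟨h, (hy₂ w hwx).mpr hwv, (hext w v).mpr hwv⟩
      · refine le_trans ?_ (himg (univ.filter (fun w => r v w)) _ _ ?_)
        · rw [(hreg v).1]; omega
        · intro w hw
          have hvw : r v w := (mem_filter.mp hw).2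
          have hwx : w ≠ v := fun e => hirr v (e ▸ hvw)
          exact Or.inr ⟨h, (hext v w).mpr hvw, (hy₁ w hwx).mpr hvw⟩
    · rcases htot v x hvx with h | h
      · refine le_trans ?_ (himg (univ.filter (fun w => r v w ∧ r x w)) _ _ ?_)
        · rw [(harc v x h).1]
        · intro w hw
          obtain ⟨h1, h2⟩ := (mem_filter.mp hw).2
          have hwx : w ≠ x := fun e => hirr x (e ▸ h2)
          exact Or.inr ⟨(hy₂ v hvx).mpr h, (hext v w).mpr h1, (hy₁ w hwx).mpr h2⟩
      · refine le_trans ?_ (himg (univ.filter (fun w => r w x ∧ r w v)) _ _ ?_)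
        · rw [(harc x v h).2]
        · intro w hw
          obtain ⟨h1, h2⟩ := (mem_filter.mp hw).2
          have hwx : w ≠ x := fun e => hirr x (e ▸ h1)
          exact Or.inl ⟨(hy₁ v hvx).mpr h, (hy₂ w hwx).mpr h1, (hext w v).mpr h2⟩
  -- conclusion
  intro a b hab
  match a, b with
  | none, none => exact absurd rfl hab
  | some u, none => exact key1 u
  | none, some w =>
    have hswap : univ.filter (fun z => CycTri r' none (some w) z)
        = univ.filter (fun z => CycTri r' (some w) none z) := by
      ext z
      simp only [mem_filter, mem_univ, true_and, CycTri]
      tauto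
    rw [hswap]
    exact key1 w
  | some u, some w =>
    have hne : u ≠ w := fun e => hab (e ▸ rfl)
    refine le_trans ?_ (himg (univ.filter (fun z => CycTri r u w z)) _ _ ?_)
    · exact le_trans (Nat.le_succ k) (hC u w hne)
    · intro z hz
      rcases (mem_filter.mp hz).2 with ⟨h1, h2, h3⟩ | ⟨h1, h2, h3⟩
      · exact Or.inl ⟨(hext u w).mpr h1, (hext w z).mpr h2, (hext z u).mpr h3⟩
      · exact Or.inr ⟨(hext w u).mpr h1, (hext u z).mpr h2, (hext z w).mpr h3⟩
end
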